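/- arXiv:2401.00298 — 2 statements merged into one kernel-verified Lean document; each statement's English description precedes it below -/
import Mathlib

section
/- In a finite acyclic MDP, for every policy π the advantage-based bonus R^B_π satisfies: (i) π is everywhere-optimal for R^A + R^B_π; and (ii) V_s(π, R^A + R^B_π) = V_s(π^A, R^A) for every state s, i.e., with this bonus the agent's optimal value from every state equals his optimal value without any bonus. -/
open Finset

/-!
Both parts are comparisons with `W = V πA RA` by induction along the acyclic order. The bonus is
exactly the advantage of `πA` at `π`'s action, so `W` satisfies the Bellman equation of `π` for
`RA + RBπ`, which gives (ii). For any other action `a` the bonus vanishes and the one-step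
lookahead `RA s a + ∑ t, P s a t * W t` is the value of the policy switching `πA` to `a` at `s`
only, hence at most `W s`; so `W` is a Bellman super-solution for every policy, which gives (i).
-/

variable {S A : Type*} [Fintype S]

def IsPolicy (act : S → Finset A) (π : S → A) : Prop :=
  ∀ s, act s ≠ ∅ → π s ∈ act s

structure IsValueOfAcyclicMDP (act : S → Finset A) (P : S → A → S → ℝ) (rank : S → ℕ)
    (V : (S → A) → (S → A → ℝ) → S → ℝ) : Prop where
  nonneg : ∀ s a t, 0 ≤ P s a t
  rank_lt : ∀ s, ∀ a ∈ act s, ∀ t, 0 < P s a t → rank t < rank s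
  terminal : ∀ π R s, act s = ∅ → V π R s = 0
  bellman : ∀ π R s, act s ≠ ∅ → V π R s = R s (π s) + ∑ t, P s (π s) t * V π R t

namespace IsValueOfAcyclicMDP

variable {act : S → Finset A} {P : S → A → S → ℝ} {rank : S → ℕ}
  {V : (S → A) → (S → A → ℝ) → S → ℝ}

theorem sum_mul_le_sum_mul (hV : IsValueOfAcyclicMDP act P rank V) {s : S} {a : A}
    (ha : a ∈ act s) {f g : S → ℝ} (h : ∀ t, rank t < rank s → f t ≤ g t) :
    ∑ t, P s a t * f t ≤ ∑ t, P s a t * g t := by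
  refine sum_le_sum fun t _ => ?_
  rcases (hV.nonneg s a t).eq_or_lt with hzero | hpos
  · simp [← hzero]
  · exact mul_le_mul_of_nonneg_left (h t (hV.rank_lt s a ha t hpos)) hpos.le

theorem sum_mul_congr (hV : IsValueOfAcyclicMDP act P rank V) {s : S} {a : A}
    (ha : a ∈ act s) {f g : S → ℝ} (h : ∀ t, rank t < rank s → f t = g t) :
    ∑ t, P s a t * f t = ∑ t, P s a t * g t :=
  le_antisymm (hV.sum_mul_le_sum_mul ha fun t ht => (h t ht).le)
    (hV.sum_mul_le_sum_mul ha fun t ht => (h t ht).ge)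

theorem value_congr (hV : IsValueOfAcyclicMDP act P rank V) {π₁ π₂ : S → A}
    (hπ₂ : IsPolicy act π₂) (R : S → A → ℝ) (s : S)
    (h : ∀ t, rank t ≤ rank s → π₁ t = π₂ t) : V π₁ R s = V π₂ R s := by
  by_cases hs : act s = ∅
  · rw [hV.terminal _ _ _ hs, hV.terminal _ _ _ hs]
  rw [hV.bellman _ _ _ hs, hV.bellman _ _ _ hs, h s le_rfl]
  congr 1
  exact hV.sum_mul_congr (hπ₂ s hs) fun t ht =>
    hV.value_congr hπ₂ R t fun u hu => h u (hu.trans ht.le)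
termination_by rank s

theorem value_le_of_bellman_le (hV : IsValueOfAcyclicMDP act P rank V) {π : S → A}
    (hπ : IsPolicy act π) {R : S → A → ℝ} {W : S → ℝ} (hW₀ : ∀ s, act s = ∅ → 0 ≤ W s)
    (hW : ∀ s, act s ≠ ∅ → R s (π s) + ∑ t, P s (π s) t * W t ≤ W s) (s : S) :
    V π R s ≤ W s := by
  by_cases hs : act s = ∅
  · rw [hV.terminal _ _ _ hs]
    exact hW₀ s hs
  rw [hV.bellman _ _ _ hs]
  have hsum := hV.sum_mul_le_sum_mul (hπ s hs) fun t (_ : rank t < rank s) =>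
    hV.value_le_of_bellman_le hπ hW₀ hW t
  linarith [hW s hs]
termination_by rank s

theorem value_eq_of_bellman (hV : IsValueOfAcyclicMDP act P rank V) {π : S → A}
    (hπ : IsPolicy act π) {R : S → A → ℝ} {W : S → ℝ} (hW₀ : ∀ s, act s = ∅ → W s = 0)
    (hW : ∀ s, act s ≠ ∅ → R s (π s) + ∑ t, P s (π s) t * W t = W s) (s : S) :
    V π R s = W s := by
  by_cases hs : act s = ∅
  · rw [hV.terminal _ _ _ hs, hW₀ s hs]
  rw [hV.bellman _ _ _ hs, ← hW s hs]
  congr 1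
  exact hV.sum_mul_congr (hπ s hs) fun t _ => hV.value_eq_of_bellman hπ hW₀ hW t
termination_by rank s

theorem lookahead_le_value_of_optimal (hV : IsValueOfAcyclicMDP act P rank V) {R : S → A → ℝ}
    {πA : S → A} (hπA : IsPolicy act πA)
    (hopt : ∀ π, IsPolicy act π → ∀ s, V π R s ≤ V πA R s) {s : S} {a : A} (ha : a ∈ act s) :
    R s a + ∑ t, P s a t * V πA R t ≤ V πA R s := by
  classical
  have hs : act s ≠ ∅ := ne_empty_of_mem ha
  have hdev : IsPolicy act (Function.update πA s a) := fun t ht => by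
    rcases eq_or_ne t s with rfl | hts
    · simpa using ha
    · simpa [hts] using hπA t ht
  have hdev_value : V (Function.update πA s a) R s = R s a + ∑ t, P s a t * V πA R t := by
    rw [hV.bellman _ _ _ hs, Function.update_self]
    congr 1
    refine hV.sum_mul_congr ha fun t ht => hV.value_congr hπA R t fun u hu => ?_
    exact Function.update_of_ne (by rintro rfl; omega) _ _
  exact hdev_value ▸ hopt _ hdev s

end IsValueOfAcyclicMDP

theorem stmt_5_general {S A : Type} [Fintype S] [DecidableEq A]
    (act : S → Finset A)
    (P : S → A → S → ℝ)
    (hP0 : ∀ s a t, 0 ≤ P s a t)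
    (rank : S → ℕ)
    (hacyc : ∀ s, ∀ a ∈ act s, ∀ t, 0 < P s a t → rank t < rank s)
    (V : (S → A) → (S → A → ℝ) → S → ℝ)
    (hVterm : ∀ (π : S → A) (R : S → A → ℝ) (s : S), act s = ∅ → V π R s = 0)
    (hVrec : ∀ (π : S → A) (R : S → A → ℝ) (s : S), act s ≠ ∅ →
      V π R s = R s (π s) + ∑ t, P s (π s) t * V π R t)
    (RA : S → A → ℝ)
    (πA : S → A) (hπA : ∀ s, act s ≠ ∅ → πA s ∈ act s)
    (hπAopt : ∀ π : S → A, (∀ s, act s ≠ ∅ → π s ∈ act s) → ∀ s, V π RA s ≤ V πA RA s)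
    (π : S → A) (hπ : ∀ s, act s ≠ ∅ → π s ∈ act s)
    (RBπ : S → A → ℝ)
    (hRBπ : ∀ s b, RBπ s b =
      if act s ≠ ∅ ∧ b = π s then
        V πA RA s - (RA s b + ∑ t, P s b t * V πA RA t)
      else 0) :
    (∀ π' : S → A, (∀ s, act s ≠ ∅ → π' s ∈ act s) → ∀ s,
      V π' (fun s b => RA s b + RBπ s b) s ≤ V π (fun s b => RA s b + RBπ s b) s) ∧
    (∀ s, V π (fun s b => RA s b + RBπ s b) s = V πA RA s) := by
  have hV : IsValueOfAcyclicMDP act P rank V := ⟨hP0, hacyc, hVterm, hVrec⟩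
  have hvalue : ∀ s, V π (fun s b => RA s b + RBπ s b) s = V πA RA s :=
    hV.value_eq_of_bellman hπ (hVterm πA RA) fun s hs => by
      rw [hRBπ, if_pos ⟨hs, rfl⟩]
      ring
  refine ⟨fun π' hπ' s => ?_, hvalue⟩
  rw [hvalue]
  refine hV.value_le_of_bellman_le hπ' (fun t ht => (hVterm πA RA t ht).ge) (fun t ht => ?_) s
  have hlookahead := hV.lookahead_le_value_of_optimal hπA hπAopt (hπ' t ht)
  rw [hRBπ]
  split_ifs <;> linarith

/-- in a finite acyclic MDP, the advantage-based bonus of any policy `π`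
makes `π` everywhere-optimal for `R^A + R^B_π`, and under it the agent's value from every
state equals his optimal value without any bonus. -/
theorem stmt_5 {S A : Type} [Fintype S] [Fintype A] [DecidableEq S] [DecidableEq A]
    (act : S → Finset A)
    (P : S → A → S → ℝ)
    (hP0 : ∀ s a t, 0 ≤ P s a t)
    (hP1 : ∀ s, ∀ a ∈ act s, ∑ t, P s a t = 1)
    (rank : S → ℕ)
    (hacyc : ∀ s, ∀ a ∈ act s, ∀ t, 0 < P s a t → rank t < rank s)
    (V : (S → A) → (S → A → ℝ) → S → ℝ)
    (hVterm : ∀ (π : S → A) (R : S → A → ℝ) (s : S), act s = ∅ → V π R s = 0)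
    (hVrec : ∀ (π : S → A) (R : S → A → ℝ) (s : S), act s ≠ ∅ →
      V π R s = R s (π s) + ∑ t, P s (π s) t * V π R t)
    (RA : S → A → ℝ)
    (πA : S → A) (hπA : ∀ s, act s ≠ ∅ → πA s ∈ act s)
    (hπAopt : ∀ π : S → A, (∀ s, act s ≠ ∅ → π s ∈ act s) → ∀ s, V π RA s ≤ V πA RA s)
    (π : S → A) (hπ : ∀ s, act s ≠ ∅ → π s ∈ act s)
    (RBπ : S → A → ℝ)
    (hRBπ : ∀ s b, RBπ s b =
      if act s ≠ ∅ ∧ b = π s then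
        V πA RA s - (RA s b + ∑ t, P s b t * V πA RA t)
      else 0) :
    (∀ π' : S → A, (∀ s, act s ≠ ∅ → π' s ∈ act s) → ∀ s,
      V π' (fun s b => RA s b + RBπ s b) s ≤ V π (fun s b => RA s b + RBπ s b) s) ∧
    (∀ s, V π (fun s b => RA s b + RBπ s b) s = V πA RA s) :=
  stmt_5_general act P hP0 rank hacyc V hVterm hVrec RA πA hπA hπAopt π hπ RBπ hRBπ
end

section
/- In any DDP with budget B ≥ 0, define the principal's optimal value V*_P := max{ V(π, R^P) : π a B-implementable policy }. Then V*_P = max{ u₂ : u ∈ Pareto(𝒰_{s₀}), u₁ ≥ V(π^A, R^A) − B }, and both maxima are attained. -/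
/-!
A policy is `B`-implementable iff its agent value is at least `V(π^A, R^A) - B`. A bonus of
total cost at most `B` raises the value of a policy by at most `B` and does not lower that of
`π^A`, which gives necessity. For sufficiency let `gap s a := V_s(π^A) - (R^A s a + V_{next s a}(π^A))`,
nonnegative by optimality of `π^A`; telescoping gives `V(π, R^A) + V(π, gap) = V(π^A, R^A)` for every
policy `π`. Paying `gap` exactly along the trajectory of `π` costs `V(π^A, R^A) - V(π, R^A) ≤ B`,
lifts `π` to the value `V(π^A, R^A)`, and lifts no policy above it.

The principal's problem is therefore to maximise `u₂` over the finitely many attainable points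
with `u₁ ≥ V(π^A, R^A) - B`; a maximiser that breaks ties by `u₁` lies on the Pareto frontier.
-/

open Finset

theorem not_dominated_of_forall_toLex_le {α β : Type*} [LinearOrder α] [LinearOrder β]
    {X : Set (α × β)} {c : α} {u : α × β} (hu : c ≤ u.1)
    (hmax : ∀ w ∈ X, c ≤ w.1 → toLex (w.2, w.1) ≤ toLex (u.2, u.1)) :
    ¬∃ w ∈ X, u ≤ w ∧ u ≠ w := by
  rintro ⟨w, hw, ⟨h₁, h₂⟩, hne⟩
  rcases Prod.Lex.toLex_le_toLex.mp (hmax w hw (hu.trans h₁)) with h | ⟨h, h'⟩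
  · exact absurd h₂ (not_le.mpr h)
  · exact hne (Prod.ext (le_antisymm h₁ h') h.symm)

namespace DDP

variable {S A : Type} {act : S → Finset A} {next : S → A → S} {rank : S → ℕ}

def IsPolicy (act : S → Finset A) (π : S → A) : Prop :=
  ∀ s, act s ≠ ∅ → π s ∈ act s

structure IsValueFunction (act : S → Finset A) (next : S → A → S)
    (V : (S → A) → (S → A → ℝ) → S → ℝ) : Prop where
  terminal : ∀ π R s, act s = ∅ → V π R s = 0
  step : ∀ π R s, act s ≠ ∅ → V π R s = R s (π s) + V π R (next s (π s))

def trajectory [DecidableEq S] (hacyc : ∀ s, ∀ a ∈ act s, rank (next s a) < rank s)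
    {π : S → A} (hπ : IsPolicy act π) (s : S) : Finset S :=
  if _ : (act s).Nonempty then insert s (trajectory hacyc hπ (next s (π s))) else ∅
termination_by rank s
decreasing_by exact hacyc s (π s) (hπ s (by assumption : (act s).Nonempty).ne_empty)

section Trajectory

variable [DecidableEq S] (hacyc : ∀ s, ∀ a ∈ act s, rank (next s a) < rank s)
  {π : S → A} (hπ : IsPolicy act π)

theorem trajectory_of_nonempty {s : S} (h : (act s).Nonempty) :
    trajectory hacyc hπ s = insert s (trajectory hacyc hπ (next s (π s))) := by
  rw [trajectory, dif_pos h]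

theorem trajectory_of_eq_empty {s : S} (h : act s = ∅) : trajectory hacyc hπ s = ∅ := by
  rw [trajectory, dif_neg (not_nonempty_iff_eq_empty.mpr h)]

theorem nonempty_and_rank_le_of_mem_trajectory {s t : S} (ht : t ∈ trajectory hacyc hπ s) :
    (act t).Nonempty ∧ rank t ≤ rank s := by
  by_cases h : (act s).Nonempty
  · rw [trajectory_of_nonempty hacyc hπ h, mem_insert] at ht
    rcases ht with rfl | ht
    · exact ⟨h, le_rfl⟩
    · have ih := nonempty_and_rank_le_of_mem_trajectory ht
      exact ⟨ih.1, ih.2.trans (hacyc s (π s) (hπ s h.ne_empty)).le⟩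
  · rw [trajectory_of_eq_empty hacyc hπ (not_nonempty_iff_eq_empty.mp h)] at ht
    exact absurd ht (notMem_empty t)
termination_by rank s
decreasing_by exact hacyc s (π s) (hπ s h.ne_empty)

theorem notMem_trajectory_next {s : S} (h : act s ≠ ∅) :
    s ∉ trajectory hacyc hπ (next s (π s)) := fun hs =>
  (hacyc s (π s) (hπ s h)).not_ge (nonempty_and_rank_le_of_mem_trajectory hacyc hπ hs).2

end Trajectory

def suboptimalityGap (next : S → A → S) (V : (S → A) → (S → A → ℝ) → S → ℝ)
    (R : S → A → ℝ) (πA : S → A) (s : S) (a : A) : ℝ :=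
  V πA R s - (R s a + V πA R (next s a))

section Value

variable {V : (S → A) → (S → A → ℝ) → S → ℝ} (hV : IsValueFunction act next V)
  (hacyc : ∀ s, ∀ a ∈ act s, rank (next s a) < rank s) {π : S → A} (hπ : IsPolicy act π)
include hV hacyc hπ

theorem value_eq_sum_trajectory [DecidableEq S] (R : S → A → ℝ) (s : S) :
    V π R s = ∑ t ∈ trajectory hacyc hπ s, R t (π t) := by
  by_cases h : (act s).Nonempty
  · rw [trajectory_of_nonempty hacyc hπ h,
      sum_insert (notMem_trajectory_next hacyc hπ h.ne_empty), hV.step π R s h.ne_empty,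
      value_eq_sum_trajectory R (next s (π s))]
  · have h := not_nonempty_iff_eq_empty.mp h
    rw [trajectory_of_eq_empty hacyc hπ h, sum_empty, hV.terminal π R s h]
termination_by rank s
decreasing_by exact hacyc s (π s) (hπ s h.ne_empty)

theorem value_add (R₁ R₂ : S → A → ℝ) (s : S) :
    V π (fun t a => R₁ t a + R₂ t a) s = V π R₁ s + V π R₂ s := by
  classical
  simp only [value_eq_sum_trajectory hV hacyc hπ, sum_add_distrib]

theorem value_le_value {R₁ R₂ : S → A → ℝ} (h : ∀ t, act t ≠ ∅ → R₁ t (π t) ≤ R₂ t (π t))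
    (s : S) : V π R₁ s ≤ V π R₂ s := by
  classical
  simp only [value_eq_sum_trajectory hV hacyc hπ]
  exact sum_le_sum fun t ht =>
    h t (nonempty_and_rank_le_of_mem_trajectory hacyc hπ ht).1.ne_empty

theorem value_eq_value_of_eqOn_trajectory [DecidableEq S] {R₁ R₂ : S → A → ℝ} {s : S}
    (h : ∀ t ∈ trajectory hacyc hπ s, R₁ t (π t) = R₂ t (π t)) : V π R₁ s = V π R₂ s := by
  simp only [value_eq_sum_trajectory hV hacyc hπ]
  exact sum_congr rfl h

theorem value_nonneg {R : S → A → ℝ} (h : ∀ t a, 0 ≤ R t a) (s : S) : 0 ≤ V π R s := by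
  classical
  rw [value_eq_sum_trajectory hV hacyc hπ]
  exact sum_nonneg fun t _ => h t (π t)

theorem value_le_sum [Fintype S] [Fintype A] {R : S → A → ℝ} (h : ∀ t a, 0 ≤ R t a) (s : S) :
    V π R s ≤ ∑ t, ∑ a, R t a := by
  classical
  rw [value_eq_sum_trajectory hV hacyc hπ]
  calc ∑ t ∈ trajectory hacyc hπ s, R t (π t) ≤ ∑ t, R t (π t) :=
        sum_le_sum_of_subset_of_nonneg (subset_univ _) fun t _ _ => h t (π t)
    _ ≤ ∑ t, ∑ a, R t a :=
        sum_le_sum fun t _ => single_le_sum (fun a _ => h t a) (mem_univ (π t))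

theorem value_potential {Φ : S → ℝ} (hΦ : ∀ t, act t = ∅ → Φ t = 0) (s : S) :
    V π (fun t a => Φ t - Φ (next t a)) s = Φ s := by
  by_cases h : act s = ∅
  · rw [hV.terminal π _ s h, hΦ s h]
  · have hlt := hacyc s (π s) (hπ s h)
    rw [hV.step π _ s h, value_potential hΦ (next s (π s)), sub_add_cancel]
termination_by rank s
decreasing_by exact hlt

theorem value_eq_value_of_eqOn_rank_le {π' : S → A} (R : S → A → ℝ) {s : S}
    (h : ∀ t, rank t ≤ rank s → π t = π' t) : V π R s = V π' R s := by
  by_cases hs : act s = ∅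
  · rw [hV.terminal π R s hs, hV.terminal π' R s hs]
  · have hlt := hacyc s (π s) (hπ s hs)
    rw [hV.step π R s hs, hV.step π' R s hs, ← h s le_rfl,
      value_eq_value_of_eqOn_rank_le R fun t ht => h t (ht.trans hlt.le)]
termination_by rank s
decreasing_by exact hlt

theorem value_add_value_suboptimalityGap (R : S → A → ℝ) (π₀ : S → A) (s : S) :
    V π R s + V π (suboptimalityGap next V R π₀) s = V π₀ R s := by
  rw [← value_add hV hacyc hπ]
  have hshape : (fun t a => R t a + suboptimalityGap next V R π₀ t a) =
      fun t a => V π₀ R t - V π₀ R (next t a) := by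
    funext t a
    rw [suboptimalityGap]
    ring
  rw [hshape, value_potential hV hacyc hπ fun t ht => hV.terminal π₀ R t ht]

end Value

theorem sub_le_value_of_bonus [Fintype S] [Fintype A] {V : (S → A) → (S → A → ℝ) → S → ℝ}
    (hV : IsValueFunction act next V) (hacyc : ∀ s, ∀ a ∈ act s, rank (next s a) < rank s)
    {π₀ π : S → A} (hπ₀ : IsPolicy act π₀) (hπ : IsPolicy act π) {R RB : S → A → ℝ} {B : ℝ}
    (hRB : ∀ s a, 0 ≤ RB s a) (hcost : ∑ s, ∑ a, RB s a ≤ B) {s₀ : S}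
    (hle : V π₀ (fun s a => R s a + RB s a) s₀ ≤ V π (fun s a => R s a + RB s a) s₀) :
    V π₀ R s₀ - B ≤ V π R s₀ := by
  rw [value_add hV hacyc hπ₀, value_add hV hacyc hπ] at hle
  linarith [value_nonneg hV hacyc hπ₀ hRB s₀, value_le_sum hV hacyc hπ hRB s₀]

section Optimal

variable {V : (S → A) → (S → A → ℝ) → S → ℝ} (hV : IsValueFunction act next V)
  (hacyc : ∀ s, ∀ a ∈ act s, rank (next s a) < rank s)
  {R : S → A → ℝ} {πA : S → A} (hπA : IsPolicy act πA)
  (hopt : ∀ π, IsPolicy act π → ∀ s, V π R s ≤ V πA R s)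
include hV hacyc hπA hopt

theorem suboptimalityGap_nonneg {s : S} {a : A} (ha : a ∈ act s) :
    0 ≤ suboptimalityGap next V R πA s a := by
  classical
  have hπ' : IsPolicy act (Function.update πA s a) := by
    intro t ht
    rcases eq_or_ne t s with rfl | hts
    · simpa using ha
    · simpa [hts] using hπA t ht
  have hlt := hacyc s a ha
  have hafter : V (Function.update πA s a) R (next s a) = V πA R (next s a) :=
    value_eq_value_of_eqOn_rank_le hV hacyc hπ' R fun t ht =>
      Function.update_of_ne (fun hts => by subst hts; omega) ..
  have := hopt _ hπ' s
  rw [hV.step _ R s (ne_empty_of_mem ha), Function.update_self, hafter] at this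
  unfold suboptimalityGap
  linarith

theorem exists_bonus_of_sub_le_value [Fintype S] [Fintype A] {π : S → A} (hπ : IsPolicy act π)
    {B : ℝ} {s₀ : S} (hfeas : V πA R s₀ - B ≤ V π R s₀) :
    ∃ RB : S → A → ℝ, (∀ s a, 0 ≤ RB s a) ∧ ∑ s, ∑ a, RB s a ≤ B ∧
      ∀ π', IsPolicy act π' →
        V π' (fun s a => R s a + RB s a) s₀ ≤ V π (fun s a => R s a + RB s a) s₀ := by
  classical
  set gap := suboptimalityGap next V R πA
  set T := trajectory hacyc hπ s₀
  have hgap : ∀ t a, a ∈ act t → 0 ≤ gap t a := fun t a ha =>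
    suboptimalityGap_nonneg hV hacyc hπA hopt ha
  set RB : S → A → ℝ := fun t a => if t ∈ T ∧ a = π t then gap t a else 0
  have hRB_le : ∀ π', IsPolicy act π' → ∀ t, act t ≠ ∅ → RB t (π' t) ≤ gap t (π' t) := by
    intro π' hπ' t ht
    simp only [RB]
    split_ifs
    · exact le_rfl
    · exact hgap t _ (hπ' t ht)
  refine ⟨RB, fun t a => ?_, ?_, fun π' hπ' => ?_⟩
  · simp only [RB]
    split_ifs with h
    · rcases h with ⟨ht, rfl⟩
      exact hgap t _ (hπ t (nonempty_and_rank_le_of_mem_trajectory hacyc hπ ht).1.ne_empty)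
    · exact le_rfl
  · have hsum : ∑ t, ∑ a, RB t a = ∑ t ∈ T, gap t (π t) := by
      simp [RB, ite_and, sum_ite_mem]
    rw [hsum, ← value_eq_sum_trajectory hV hacyc hπ]
    linarith [value_add_value_suboptimalityGap hV hacyc hπ R πA s₀]
  · have hπ'_bonus : V π' RB s₀ ≤ V π' gap s₀ :=
      value_le_value hV hacyc hπ' (hRB_le π' hπ') s₀
    have hπ_bonus : V π RB s₀ = V π gap s₀ :=
      value_eq_value_of_eqOn_trajectory hV hacyc hπ fun t ht => if_pos ⟨ht, rfl⟩
    rw [value_add hV hacyc hπ', value_add hV hacyc hπ]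
    linarith [value_add_value_suboptimalityGap hV hacyc hπ' R πA s₀,
      value_add_value_suboptimalityGap hV hacyc hπ R πA s₀]

theorem exists_bonus_iff_sub_le_value [Fintype S] [Fintype A] {π : S → A} (hπ : IsPolicy act π)
    {B : ℝ} {s₀ : S} :
    (∃ RB : S → A → ℝ, (∀ s a, 0 ≤ RB s a) ∧ ∑ s, ∑ a, RB s a ≤ B ∧
      ∀ π', IsPolicy act π' →
        V π' (fun s a => R s a + RB s a) s₀ ≤ V π (fun s a => R s a + RB s a) s₀) ↔
      V πA R s₀ - B ≤ V π R s₀ :=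
  ⟨fun ⟨_, hRB, hcost, hbest⟩ => sub_le_value_of_bonus hV hacyc hπA hπ hRB hcost (hbest πA hπA),
    exists_bonus_of_sub_le_value hV hacyc hπA hopt hπ⟩

end Optimal

end DDP

/-- in a DDP with budget `B ≥ 0`, the principal's optimal value over
`B`-implementable policies is attained and equals the maximal second coordinate over
Pareto-frontier points of `𝒰_{s₀}` whose first coordinate is at least
`V(π^A,R^A) − B`, and this latter maximum is attained too. -/
theorem stmt_13 {S A : Type} [Fintype S] [Fintype A]
    (s₀ : S) (act : S → Finset A) (next : S → A → S)
    (rank : S → ℕ) (hacyc : ∀ s, ∀ a ∈ act s, rank (next s a) < rank s)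
    (V : (S → A) → (S → A → ℝ) → S → ℝ)
    (hVterm : ∀ (π : S → A) (R : S → A → ℝ) (s : S), act s = ∅ → V π R s = 0)
    (hVrec : ∀ (π : S → A) (R : S → A → ℝ) (s : S), act s ≠ ∅ →
      V π R s = R s (π s) + V π R (next s (π s)))
    (RA RP : S → A → ℝ)
    (πA : S → A) (hπA : ∀ s, act s ≠ ∅ → πA s ∈ act s)
    (hπAopt : ∀ π : S → A, (∀ s, act s ≠ ∅ → π s ∈ act s) → ∀ s, V π RA s ≤ V πA RA s)
    (B : ℝ) (hB : 0 ≤ B)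
    (Pareto : Set (ℝ × ℝ) → Set (ℝ × ℝ))
    (hPareto : ∀ X : Set (ℝ × ℝ), Pareto X = {u ∈ X | ¬∃ w ∈ X, u ≤ w ∧ u ≠ w})
    (U : S → Set (ℝ × ℝ))
    (hU : ∀ t, U t = {u | ∃ π : S → A, (∀ r, act r ≠ ∅ → π r ∈ act r) ∧
      u = (V π RA t, V π RP t)})
    (Impl : (S → A) → Prop)
    (hImpl : ∀ π : S → A, Impl π ↔
      ∃ RB : S → A → ℝ, (∀ s a, 0 ≤ RB s a) ∧ (∑ s, ∑ a, RB s a) ≤ B ∧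
        ∀ π' : S → A, (∀ s, act s ≠ ∅ → π' s ∈ act s) →
          V π' (fun s a => RA s a + RB s a) s₀ ≤ V π (fun s a => RA s a + RB s a) s₀) :
    ∃ πstar : S → A, (∀ s, act s ≠ ∅ → πstar s ∈ act s) ∧ Impl πstar ∧
      (∀ π : S → A, (∀ s, act s ≠ ∅ → π s ∈ act s) → Impl π →
        V π RP s₀ ≤ V πstar RP s₀) ∧
      ∃ u ∈ Pareto (U s₀), V πA RA s₀ - B ≤ u.1 ∧ u.2 = V πstar RP s₀ ∧
        ∀ u' ∈ Pareto (U s₀), V πA RA s₀ - B ≤ u'.1 → u'.2 ≤ u.2 := by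
  classical
  have hV : DDP.IsValueFunction act next V := ⟨hVterm, hVrec⟩
  have hImpl_iff : ∀ π, DDP.IsPolicy act π → (Impl π ↔ V πA RA s₀ - B ≤ V π RA s₀) :=
    fun π hπ => (hImpl π).trans (DDP.exists_bonus_iff_sub_le_value hV hacyc hπA hπAopt hπ)
  have hmem : ∀ π, DDP.IsPolicy act π → (V π RA s₀, V π RP s₀) ∈ U s₀ := fun π hπ => by
    rw [hU]; exact ⟨π, hπ, rfl⟩
  obtain ⟨u, ⟨hu, hcu⟩, hmax⟩ := Set.exists_max_image {x ∈ U s₀ | V πA RA s₀ - B ≤ x.1}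
    (fun x => toLex (x.2, x.1))
    ((Set.finite_range fun π : S → A => (V π RA s₀, V π RP s₀)).subset (by
      rintro _ ⟨hx, -⟩; rw [hU] at hx; obtain ⟨π, -, rfl⟩ := hx; exact ⟨π, rfl⟩))
    ⟨_, hmem πA hπA, by linarith⟩
  rw [hU] at hu
  obtain ⟨πs, hπs, rfl⟩ := hu
  refine ⟨πs, hπs, (hImpl_iff πs hπs).2 hcu, fun π hπ himpl => ?_, _, ?_, hcu, rfl, ?_⟩
  · exact Prod.Lex.monotone_fst _ _ (hmax _ ⟨hmem π hπ, (hImpl_iff π hπ).1 himpl⟩)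
  · rw [hPareto]
    exact ⟨hmem πs hπs, not_dominated_of_forall_toLex_le hcu fun w hw hcw => hmax w ⟨hw, hcw⟩⟩
  · intro u' hu' hcu'
    rw [hPareto] at hu'
    exact Prod.Lex.monotone_fst _ _ (hmax u' ⟨hu'.1, hcu'⟩)
end
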